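/- Let S = ⊕_{i∈ℤ} S_i be an epsilon-strongly ℤ-graded ring with principal component R = S_0, and for a right ideal I of S and n ≥ 1 set Id_n(I) = { r ∈ R : there exist s_i ∈ S_i for −n+1 ≤ i ≤ −1 with r + Σ_{i=−n+1}^{−1} s_i ∈ I }. If J ⊆ I are right ideals of S such that Id_n(I) = Id_n(J) for all n ≥ 1, then J = I. -/

import Mathlib

open Pointwise

/-- `A` is a `ℤ`-grading of the ring `S`: `S` is the internal direct sum of the
additive subgroups `A i`, and `A i * A j ⊆ A (i + j)` for all `i j : ℤ`. -/
def IsZGrading {S : Type*} [Ring S] (A : ℤ → AddSubgroup S) : Prop :=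
  DirectSum.IsInternal A ∧ ∀ i j : ℤ, ∀ x ∈ A i, ∀ y ∈ A j, x * y ∈ A (i + j)

/-- The `ℤ`-grading `A` is epsilon-strong: it is symmetric (`A i * A (-i) * A i = A i`)
and for every `i` there is `ε i ∈ A i * A (-i)` acting as a left identity on `A i`, with
`ε (-i)` acting as a right identity on `A i`.  Here `P * Q` denotes the additive subgroup
generated by products of elements of `P` and `Q`. -/
def IsEpsilonStrongZ {S : Type*} [Ring S] (A : ℤ → AddSubgroup S) : Prop :=
  (∀ i : ℤ, A i * A (-i) * A i = A i) ∧
  ∃ ε : ℤ → S, ∀ i : ℤ, ε i ∈ A i * A (-i) ∧ ∀ x ∈ A i, ε i * x = x ∧ x * ε (-i) = x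

/-- `I` is a right ideal of the ring `S`. -/
def IsRightIdeal {S : Type*} [Ring S] (I : Set S) : Prop :=
  (0 : S) ∈ I ∧ (∀ x ∈ I, ∀ y ∈ I, x + y ∈ I) ∧ (∀ x ∈ I, -x ∈ I) ∧
    ∀ x ∈ I, ∀ s : S, x * s ∈ I

/-- For a right ideal `I` of a `ℤ`-graded ring `S` and `n ≥ 1`,
`IdSet A I n = { r ∈ S_0 : r + ∑_{i = -n+1}^{-1} s_i ∈ I for some s_i ∈ S_i }`,
the set of leading (degree-zero) coefficients of elements of `I` of length at most `n`. -/
def IdSet {S : Type*} [Ring S] (A : ℤ → AddSubgroup S) (I : Set S) (n : ℕ) : Set S :=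
  {r : S | r ∈ A 0 ∧ ∃ s : ℤ → S, (∀ i : ℤ, s i ∈ A i) ∧
    r + ∑ i ∈ Finset.Icc (-(n : ℤ) + 1) (-1), s i ∈ I}

/-!
Write `L(m, d)` for `⨆ i ∈ [m, d], A i`. By induction on the length `n = d - m + 1` we show
that every `x ∈ I ∩ L(m, d)` lies in `J`. Split off the top component `c ∈ A d` of `x`.
For `b ∈ A (-d)` the element `x b ∈ I` has leading coefficient `c b` and lower terms in degrees
`-n+1, …, -1`, so `c b ∈ Id_n(I) = Id_n(J)`: some `y ∈ J` has leading coefficient `c b` and the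
same shape. Writing `ε_{-d} = ∑ b_k a_k` with `b_k ∈ A (-d)`, `a_k ∈ A d`, the element
`z = ∑ y_k a_k ∈ J` has top component `c ε_{-d} = c`, so `x - z ∈ I ∩ L(m, d - 1)` lies in `J`
by induction, and hence so does `x`.
-/

namespace AddSubgroup

variable {ι M : Type*} [AddCommGroup M]

theorem mem_biSup_finset_iff_exists_sum [DecidableEq ι] (A : ι → AddSubgroup M) {s : Finset ι}
    {x : M} : x ∈ ⨆ i ∈ s, A i ↔ ∃ c : ι → M, (∀ i, c i ∈ A i) ∧ ∑ i ∈ s, c i = x := by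
  refine ⟨fun hx => ?_, ?_⟩
  · induction s using Finset.induction_on generalizing x with
    | empty =>
      simp only [Finset.notMem_empty, iSup_false, iSup_bot, mem_bot] at hx
      exact ⟨0, fun i => zero_mem _, by simp [hx]⟩
    | insert a s ha ih =>
      rw [Finset.iSup_insert, mem_sup] at hx
      obtain ⟨y, hy, z, hz, rfl⟩ := hx
      obtain ⟨c, hc, rfl⟩ := ih hz
      refine ⟨Function.update c a y, fun i => ?_, ?_⟩
      · rcases eq_or_ne i a with rfl | hi <;> simp [*]
      · rw [Finset.sum_insert ha, Function.update_self]
        congr 1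
        exact Finset.sum_congr rfl fun i hi => Function.update_of_ne (ne_of_mem_of_not_mem hi ha) ..
  · rintro ⟨c, hc, rfl⟩
    exact sum_mem fun i hi => le_iSup₂ (f := fun i (_ : i ∈ s) => A i) i hi (hc i)

end AddSubgroup

theorem mul_mem_biSup_of_mem_biSup {ι S : Type*} [Add ι] [Ring S] {A : ι → AddSubgroup S}
    (hmul : ∀ i j : ι, ∀ x ∈ A i, ∀ y ∈ A j, x * y ∈ A (i + j))
    {s t : Finset ι} {j : ι} (hst : ∀ i ∈ s, i + j ∈ t) {x y : S}
    (hx : x ∈ ⨆ i ∈ s, A i) (hy : y ∈ A j) : x * y ∈ ⨆ i ∈ t, A i := by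
  have hle : (⨆ i ∈ s, A i) ≤ (⨆ i ∈ t, A i).comap (AddMonoidHom.mulRight y) :=
    iSup₂_le fun i hi a ha =>
      le_iSup₂ (f := fun i (_ : i ∈ t) => A i) (i + j) (hst i hi) (hmul i j a ha y hy)
  exact hle hx

theorem IsRightIdeal.sub_mem {S : Type*} [Ring S] {I : Set S} (hI : IsRightIdeal I) {x y : S}
    (hx : x ∈ I) (hy : y ∈ I) : x - y ∈ I := by
  rw [sub_eq_add_neg]
  exact hI.2.1 _ hx _ (hI.2.2.1 _ hy)

section Graded

variable {S : Type*} [Ring S] {A : ℤ → AddSubgroup S}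

theorem exists_mem_sub_mem_biSup_Icc {m d : ℤ} (hmd : m ≤ d) {x : S}
    (hx : x ∈ ⨆ i ∈ Finset.Icc m d, A i) :
    ∃ c ∈ A d, x - c ∈ ⨆ i ∈ Finset.Icc m (d - 1), A i := by
  rw [← Finset.insert_Icc_sub_one_right_eq_Icc hmd, Finset.iSup_insert, AddSubgroup.mem_sup] at hx
  obtain ⟨c, hc, y, hy, rfl⟩ := hx
  exact ⟨c, hc, by simpa using hy⟩

theorem exists_mem_biSup_Icc (hA : Function.Surjective (DirectSum.coeAddMonoidHom A)) (x : S) :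
    ∃ m d : ℤ, m ≤ d ∧ x ∈ ⨆ i ∈ Finset.Icc m d, A i := by
  obtain ⟨f, rfl⟩ := hA x
  induction f using DirectSum.induction_on with
  | zero => exact ⟨0, 0, le_rfl, by simp⟩
  | of i y =>
    refine ⟨i, i, le_rfl, ?_⟩
    rw [DirectSum.coeAddMonoidHom_of]
    exact le_iSup₂ (f := fun k (_ : k ∈ Finset.Icc i i) => A k) i (by simp) y.2
  | add f g hf hg =>
    obtain ⟨m₁, d₁, h₁, hf⟩ := hf
    obtain ⟨m₂, d₂, h₂, hg⟩ := hg
    have hmono : ∀ {m d : ℤ}, min m₁ m₂ ≤ m → d ≤ max d₁ d₂ →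
        (⨆ i ∈ Finset.Icc m d, A i) ≤ ⨆ i ∈ Finset.Icc (min m₁ m₂) (max d₁ d₂), A i :=
      fun hm hd => biSup_mono fun i hi => Finset.Icc_subset_Icc hm hd hi
    rw [map_add]
    exact ⟨min m₁ m₂, max d₁ d₂, by omega, add_mem (hmono (min_le_left ..) (le_max_left ..) hf)
      (hmono (min_le_right ..) (le_max_right ..) hg)⟩

theorem mem_idSet_iff {I : Set S} {n : ℕ} {r : S} :
    r ∈ IdSet A I n ↔ r ∈ A 0 ∧ ∃ y ∈ ⨆ i ∈ Finset.Icc (-(n : ℤ) + 1) (-1), A i, r + y ∈ I := by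
  simp only [IdSet, Set.mem_ofPred_eq, AddSubgroup.mem_biSup_finset_iff_exists_sum]
  constructor
  · rintro ⟨hr, s, hs, hsI⟩
    exact ⟨hr, _, ⟨s, hs, rfl⟩, hsI⟩
  · rintro ⟨hr, _, ⟨s, hs, rfl⟩, hsI⟩
    exact ⟨hr, s, hs, hsI⟩

variable {I J : Set S}

theorem exists_mem_sub_mul_mem_biSup
    (hmul : ∀ i j : ℤ, ∀ x ∈ A i, ∀ y ∈ A j, x * y ∈ A (i + j))
    (hI : IsRightIdeal I) (hJ : IsRightIdeal J) {n : ℕ} (hIJ : IdSet A I n = IdSet A J n) {m d : ℤ}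
    (hmn : m + n = d + 1) {x c : S} (hx : x ∈ I) (hc : c ∈ A d)
    (hxc : x - c ∈ ⨆ i ∈ Finset.Icc m (d - 1), A i) {e : S} (he : e ∈ A (-d) * A d) :
    ∃ z ∈ J, z - c * e ∈ ⨆ i ∈ Finset.Icc m (d - 1), A i := by
  refine AddSubmonoid.mul_induction_on
    (show e ∈ (A (-d)).toAddSubmonoid * (A d).toAddSubmonoid from he) (fun b hb a ha => ?_) ?_
  · have hcb : c * b ∈ IdSet A J n := by
      rw [← hIJ, mem_idSet_iff]
      refine ⟨by simpa using hmul _ _ c hc b hb, x * b - c * b, ?_, by simpa using hI.2.2.2 x hx b⟩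
      rw [← sub_mul]
      exact mul_mem_biSup_of_mem_biSup hmul
        (fun i hi => by simp only [Finset.mem_Icc] at hi ⊢; omega) hxc hb
    obtain ⟨-, y, hy, hyJ⟩ := mem_idSet_iff.mp hcb
    refine ⟨(c * b + y) * a, hJ.2.2.2 _ hyJ a, ?_⟩
    rw [add_mul, mul_assoc, add_sub_cancel_left]
    exact mul_mem_biSup_of_mem_biSup hmul
      (fun i hi => by simp only [Finset.mem_Icc] at hi ⊢; omega) hy ha
  · rintro e₁ e₂ ⟨z₁, hz₁, h₁⟩ ⟨z₂, hz₂, h₂⟩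
    refine ⟨z₁ + z₂, hJ.2.1 _ hz₁ _ hz₂, ?_⟩
    rw [mul_add, add_sub_add_comm]
    exact add_mem h₁ h₂

theorem mem_of_mem_biSup_Icc
    (hmul : ∀ i j : ℤ, ∀ x ∈ A i, ∀ y ∈ A j, x * y ∈ A (i + j))
    (hI : IsRightIdeal I) (hJ : IsRightIdeal J)
    (hunit : ∀ d : ℤ, ∃ e ∈ A (-d) * A d, ∀ c ∈ A d, c * e = c) (hJI : J ⊆ I)
    (h : ∀ n : ℕ, 1 ≤ n → IdSet A I n = IdSet A J n) (n : ℕ) :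
    ∀ m d : ℤ, m + n = d + 1 → ∀ x ∈ I, x ∈ ⨆ i ∈ Finset.Icc m d, A i → x ∈ J := by
  induction n with
  | zero =>
    intro m d hmd x _ hx
    simp only [Finset.Icc_eq_empty_of_lt (by omega : d < m), Finset.notMem_empty, iSup_false,
      iSup_bot, AddSubgroup.mem_bot] at hx
    exact hx ▸ hJ.1
  | succ n ih =>
    intro m d hmd x hxI hx
    obtain ⟨c, hc, hxc⟩ := exists_mem_sub_mem_biSup_Icc (by omega) hx
    obtain ⟨e, he, hce⟩ := hunit d
    obtain ⟨z, hzJ, hzc⟩ :=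
      exists_mem_sub_mul_mem_biSup hmul hI hJ (h _ (by omega)) hmd hxI hc hxc he
    rw [hce c hc] at hzc
    have hxz : x - z ∈ J := ih m (d - 1) (by omega) _ (hI.sub_mem hxI (hJI hzJ))
      (by simpa using sub_mem hxc hzc)
    simpa using hJ.2.1 _ hxz _ hzJ

end Graded

/-- For an epsilon-strongly `ℤ`-graded ring `S`: if `J ⊆ I` are right ideals of `S` with
`IdSet A I n = IdSet A J n` for all `n ≥ 1`, then `J = I`. -/
theorem idSet_eq_implies_eq
    {S : Type*} [Ring S] (A : ℤ → AddSubgroup S)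
    (hgrading : IsZGrading A) (heps : IsEpsilonStrongZ A)
    (I J : Set S) (hI : IsRightIdeal I) (hJ : IsRightIdeal J) (hJI : J ⊆ I)
    (h : ∀ n : ℕ, 1 ≤ n → IdSet A I n = IdSet A J n) :
    J = I := by
  obtain ⟨ε, hε⟩ := heps.2
  have hunit : ∀ d : ℤ, ∃ e ∈ A (-d) * A d, ∀ c ∈ A d, c * e = c := fun d =>
    ⟨ε (-d), by simpa using (hε (-d)).1, fun c hc => ((hε d).2 c hc).2⟩
  refine Set.Subset.antisymm hJI fun x hx => ?_
  obtain ⟨m, d, hmd, hxmd⟩ := exists_mem_biSup_Icc hgrading.1.2 x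
  exact mem_of_mem_biSup_Icc hgrading.2 hI hJ hunit hJI h (d - m + 1).toNat m d (by omega)
    x hx hxmd
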